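/- arXiv:0704.3758 — 2 statements merged into one kernel-verified Lean document; each statement's English description precedes it below -/
import Mathlib

section
/- There exists a constant η₀ > 0, depending only on the distribution of V(0,0), such that for all η′ > η₀: Q[e^{−η′ V(0,0)}] ≤ e^{2η′ · G^inv(2η′)}. -/
open MeasureTheory ProbabilityTheory Filter
open scoped Classical ENNReal NNReal

noncomputable section

/-- The set of `ℓ¹`-unit vectors in `ℤ^d`, i.e. the possible increments of a
simple nearest-neighbor walk. -/
def unitVecs (d : ℕ) : Finset (Fin d → ℤ) :=
  Finset.image (fun p : Fin d × Bool =>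
    fun j => if j = p.1 then (if p.2 then 1 else -1) else 0) Finset.univ

/-- Nearest-neighbor paths of length `T` started at `0`, encoded by their increments. -/
def pathSet (d T : ℕ) : Finset (Fin T → (Fin d → ℤ)) :=
  Fintype.piFinset fun _ => unitVecs d

/-- The position at time `t` of the path started at `0` with increments `ε`. -/
def pathPos {d T : ℕ} (ε : Fin T → (Fin d → ℤ)) (t : ℕ) : Fin d → ℤ :=
  ∑ s ∈ Finset.univ.filter (fun s : Fin T => (s : ℕ) < t), ε s

/-- The `ℓ¹`-norm on `ℤ^d`. -/
def norm1 {d : ℕ} (x : Fin d → ℤ) : ℤ := ∑ i, |x i|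

variable {Ω : Type*} [MeasurableSpace Ω]

/-- The energy `H_γ(T) = ∑_{t<T} V(t, γ(t))` of the path with increments `ε`. -/
def Hpath {d : ℕ} (V : ℕ → (Fin d → ℤ) → Ω → ℝ) {T : ℕ}
    (ε : Fin T → (Fin d → ℤ)) (ω : Ω) : ℝ :=
  ∑ t : Fin T, V t (pathPos ε t) ω

/-- The partition function `Z(T) = E_0[exp H_γ(T)]` of the directed polymer. -/
def Zpart (d : ℕ) (V : ℕ → (Fin d → ℤ) → Ω → ℝ) (T : ℕ) (ω : Ω) : ℝ :=
  ((2 * d : ℝ))⁻¹ ^ T * ∑ ε ∈ pathSet d T, Real.exp (Hpath V ε ω)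

/-- `ζ(T) = sup_γ H_γ(T)`, the oriented last-passage time. -/
def zetaFn (d : ℕ) (V : ℕ → (Fin d → ℤ) → Ω → ℝ) (T : ℕ) (ω : Ω) : ℝ :=
  sSup ((fun ε => Hpath V ε ω) '' (pathSet d T : Set (Fin T → (Fin d → ℤ))))

/-- The partition function restricted to paths staying in the ball of radius `W`. -/
def Zrestr (d : ℕ) (V : ℕ → (Fin d → ℤ) → Ω → ℝ) (W T : ℕ) (ω : Ω) : ℝ :=
  ((2 * d : ℝ))⁻¹ ^ T * ∑ ε ∈ pathSet d T,
    if ∀ s ≤ T, norm1 (pathPos ε s) ≤ (W : ℤ) then Real.exp (Hpath V ε ω) else 0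

/-- The partition function restricted to paths staying in the ball of radius `W`
and returning to `0` at time `L`. -/
def ZrestrLoop (d : ℕ) (V : ℕ → (Fin d → ℤ) → Ω → ℝ) (W L : ℕ) (ω : Ω) : ℝ :=
  ((2 * d : ℝ))⁻¹ ^ L * ∑ ε ∈ pathSet d L,
    if pathPos ε L = 0 ∧ ∀ s ≤ L, norm1 (pathPos ε s) ≤ (W : ℤ) then
      Real.exp (Hpath V ε ω) else 0

/-- `V` is an IID field under `Q`. -/
def IIDField (d : ℕ) (V : ℕ → (Fin d → ℤ) → Ω → ℝ) (Q : Measure Ω) : Prop :=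
  (∀ t x, Measurable (V t x)) ∧
  iIndepFun (fun p : ℕ × (Fin d → ℤ) => V p.1 p.2) Q ∧
  ∀ p : ℕ × (Fin d → ℤ), IdentDistrib (V p.1 p.2) (V 0 0) Q Q

/-- (AS0): `V(0,0)` is non-degenerate. -/
def NonDeg (V00 : Ω → ℝ) (Q : Measure Ω) : Prop :=
  ¬ ∃ c : ℝ, ∀ᵐ ω ∂Q, V00 ω = c

/-- (AS1): `V(0,0)` is centered. -/
def Centered (V00 : Ω → ℝ) (Q : Measure Ω) : Prop :=
  ∫ ω, V00 ω ∂Q = 0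

/-- (AS2): finite exponential moments of both signs near `0`. -/
def ExpMoments (V00 : Ω → ℝ) (Q : Measure Ω) : Prop :=
  ∃ η > (0 : ℝ), ∀ η' : ℝ, |η'| < η → Integrable (fun ω => Real.exp (η' * V00 ω)) Q

/-- The regularity assumptions on `G` in (AS3): `G : ℝ₊ → ℝ₊` is continuous,
strictly increasing, vanishes at `0` and tends to `∞`. -/
def GoodG (G : ℝ → ℝ) : Prop :=
  G 0 = 0 ∧ StrictMonoOn G (Set.Ici 0) ∧ ContinuousOn G (Set.Ici 0) ∧
    (∀ x ≥ (0:ℝ), 0 ≤ G x) ∧ Tendsto G atTop atTop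

/-- (AS3): the negative tail of `V(0,0)` is `exp(-x G(x))` for `x ≥ x̄`. -/
def TailG (V00 : Ω → ℝ) (Q : Measure Ω) (G : ℝ → ℝ) (xb : ℝ) : Prop :=
  ∀ x ≥ xb, (Q {ω | x < - V00 ω}).toReal = Real.exp (-(x * G x))

/-- `Ginv` is the inverse of `G` on `ℝ₊`. -/
def GinvSpec (G Ginv : ℝ → ℝ) : Prop :=
  (∀ x ≥ (0:ℝ), Ginv (G x) = x) ∧ ∀ y ≥ (0:ℝ), 0 ≤ Ginv y ∧ G (Ginv y) = y

/-- `F(z) = z^{1/d} ∫_{G^inv(1)}^{G^inv(z)} G(x)^{-1/d} dx`. -/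
def Ffun (d : ℕ) (G Ginv : ℝ → ℝ) (z : ℝ) : ℝ :=
  z ^ ((d : ℝ)⁻¹) * ∫ x in (Ginv 1)..(Ginv z), (G x) ^ (-(d : ℝ)⁻¹)

/-- `I_η^M(T) = ∑_{t=0}^{M(T)-1} G^inv(η(T)/(1+t)^d)`. -/
def Ifun (d : ℕ) (Ginv : ℝ → ℝ) (η : ℕ → ℝ) (M : ℕ → ℕ) (T : ℕ) : ℝ :=
  ∑ t ∈ Finset.range (M T), Ginv (η T / (1 + (t : ℝ)) ^ d)

/-- `F_η^M(T) = η(T)^{1/d} ∫_{G^inv(η(T)/M(T)^d)}^{G^inv(η(T))} G(x)^{-1/d} dx`. -/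
def FfunM (d : ℕ) (G Ginv : ℝ → ℝ) (η : ℕ → ℝ) (M : ℕ → ℕ) (T : ℕ) : ℝ :=
  (η T) ^ ((d : ℝ)⁻¹) *
    ∫ x in (Ginv (η T / (M T : ℝ) ^ d))..(Ginv (η T)), (G x) ^ (-(d : ℝ)⁻¹)

/-- The free energy: `(1/T) ln Z(T) → λ` a.s., with `λ ≥ 0`. -/
def FreeEnergy (d : ℕ) (V : ℕ → (Fin d → ℤ) → Ω → ℝ) (Q : Measure Ω) (lam : ℝ) : Prop :=
  0 ≤ lam ∧
    ∀ᵐ ω ∂Q, Tendsto (fun T : ℕ => (T : ℝ)⁻¹ * Real.log (Zpart d V T ω)) atTop (nhds lam)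

/-- The rate of the lower tail of the large deviations:
`R_ε(T) = - ln Q(Z(T) ≤ e^{(λ-ε)T})`. -/
def Rate (d : ℕ) (V : ℕ → (Fin d → ℤ) → Ω → ℝ) (Q : Measure Ω) (lam ε : ℝ) (T : ℕ) : ℝ :=
  - Real.log ((Q {ω | Zpart d V T ω ≤ Real.exp ((lam - ε) * T)}).toReal)

/-- `q ∼ r`: `0 < liminf q/r ≤ limsup q/r < ∞`, i.e. `q` and `r` are comparable
up to multiplicative constants, eventually. -/
def Asymp (q r : ℕ → ℝ) : Prop :=
  ∃ c C : ℝ, 0 < c ∧ ∀ᶠ T in atTop, c * r T ≤ q T ∧ q T ≤ C * r T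

/-- `q ∼ r` for functions of a real variable. -/
def AsympR (q r : ℝ → ℝ) : Prop :=
  ∃ c C : ℝ, 0 < c ∧ ∀ᶠ x in atTop, c * r x ≤ q x ∧ q x ≤ C * r x

end

/-- Lemma 2.3: a bound on the moment generating function of `-V(0,0)`:
`Q(e^(-η'V(0,0))) ≤ e^(2η'·G⁻¹(2η'))` for all `η' > η₀`. -/
theorem mgf_bound
    {Ω : Type*} [MeasurableSpace Ω] (Q : Measure Ω) [IsProbabilityMeasure Q]
    (V00 : Ω → ℝ) (hmeas : Measurable V00)
    (h0 : NonDeg V00 Q) (h1 : Centered V00 Q) (h2 : ExpMoments V00 Q)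
    (G Ginv : ℝ → ℝ) (xb : ℝ) (hxb : 0 < xb) (hG : GoodG G)
    (hGinv : GinvSpec G Ginv) (h3 : TailG V00 Q G xb) :
    ∃ η₀ > (0:ℝ), ∀ η' : ℝ, η₀ < η' →
      Integrable (fun ω => Real.exp (-η' * V00 ω)) Q ∧
      ∫ ω, Real.exp (-η' * V00 ω) ∂Q ≤ Real.exp (2 * η' * Ginv (2 * η')) := by
  obtain ⟨hG0, hGmono, hGcont, hGnn, hGtop⟩ := hG
  obtain ⟨hGi1, hGi2⟩ := hGinv
  set m : ℝ := max xb 2 with hm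
  have hm0 : (0:ℝ) ≤ m := le_trans (by norm_num) (le_max_right xb 2)
  refine ⟨max 1 (G m / 2), lt_of_lt_of_le one_pos (le_max_left _ _), ?_⟩
  intro η' hη'
  have hη1 : 1 < η' := lt_of_le_of_lt (le_max_left _ _) hη'
  have hη0 : (0:ℝ) < η' := lt_trans one_pos hη1
  have h2η : (0:ℝ) ≤ 2 * η' := by linarith
  set a : ℝ := Ginv (2 * η') with ha
  obtain ⟨ha0, hGa⟩ := hGi2 _ h2η
  have hma : m < a := by
    by_contra h
    push_neg at h
    have hle : G a ≤ G m := hGmono.monotoneOn (Set.mem_Ici.2 ha0) (Set.mem_Ici.2 hm0) h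
    have h2 : G m / 2 < η' := lt_of_le_of_lt (le_max_right _ _) hη'
    rw [hGa] at hle
    linarith
  have haxb : xb < a := lt_of_le_of_lt (le_max_left _ _) hma
  have ha2 : (2:ℝ) < a := lt_of_le_of_lt (le_max_right _ _) hma
  -- tail measure identity
  have htail : ∀ x : ℝ, xb ≤ x → Q {ω | x < - V00 ω} = ENNReal.ofReal (Real.exp (-(x * G x))) := by
    intro x hx
    have := h3 x hx
    rw [← this, ENNReal.ofReal_toReal (measure_ne_top Q _)]
  -- measurability of the integrand
  have hfm : Measurable fun ω => Real.exp (-η' * V00 ω) :=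
    (hmeas.const_mul (-η')).exp
  -- key bound on the lintegral
  set A : Set Ω := {ω | - V00 ω ≤ a} with hA
  have hAm : MeasurableSet A := measurableSet_le hmeas.neg measurable_const
  set f : Ω → ℝ≥0∞ := fun ω => ENNReal.ofReal (Real.exp (-η' * V00 ω)) with hf
  have hsplit : ∫⁻ ω, f ω ∂Q = (∫⁻ ω in A, f ω ∂Q) + ∫⁻ ω in Aᶜ, f ω ∂Q :=
    (lintegral_add_compl f hAm).symm
  -- bound on A
  have hA_bound : ∫⁻ ω in A, f ω ∂Q ≤ ENNReal.ofReal (Real.exp (η' * a)) := by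
    calc ∫⁻ ω in A, f ω ∂Q ≤ ∫⁻ _ in A, ENNReal.ofReal (Real.exp (η' * a)) ∂Q := by
          refine setLIntegral_mono measurable_const fun ω hω => ?_
          refine ENNReal.ofReal_le_ofReal (Real.exp_le_exp.2 ?_)
          have : - V00 ω ≤ a := hω
          nlinarith
      _ = ENNReal.ofReal (Real.exp (η' * a)) * Q A := setLIntegral_const _ _
      _ ≤ ENNReal.ofReal (Real.exp (η' * a)) * 1 :=
          mul_le_mul_right prob_le_one _
      _ = _ := mul_one _
  -- shells
  set S : ℕ → Set Ω := fun k => {ω | a + k < - V00 ω ∧ - V00 ω ≤ a + k + 1} with hS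
  have hAcS : Aᶜ ⊆ ⋃ k, S k := by
    intro ω hω
    have hω' : a < - V00 ω := lt_of_not_ge hω
    set y : ℝ := - V00 ω - a with hy
    have hy0 : 0 < y := by simp [hy]; linarith
    refine Set.mem_iUnion.2 ⟨⌈y⌉₊ - 1, ?_, ?_⟩
    · have h1 : (⌈y⌉₊ : ℝ) < y + 1 := Nat.ceil_lt_add_one hy0.le
      have h2 : 1 ≤ ⌈y⌉₊ := Nat.one_le_ceil_iff.2 hy0
      have h3 : ((⌈y⌉₊ - 1 : ℕ) : ℝ) = (⌈y⌉₊ : ℝ) - 1 := by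
        push_cast [h2]; ring
      rw [h3]; simp only [hy] at *; linarith
    · have h1 : y ≤ (⌈y⌉₊ : ℝ) := Nat.le_ceil y
      have h2 : 1 ≤ ⌈y⌉₊ := Nat.one_le_ceil_iff.2 hy0
      have h3 : ((⌈y⌉₊ - 1 : ℕ) : ℝ) = (⌈y⌉₊ : ℝ) - 1 := by
        push_cast [h2]; ring
      rw [h3]; simp only [hy] at *; linarith
  -- per shell bound
  have hshell : ∀ k : ℕ, ∫⁻ ω in S k, f ω ∂Q ≤
      ENNReal.ofReal (Real.exp (η' * (1 - a))) * ENNReal.ofReal (Real.exp (-η')) ^ k := by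
    intro k
    have hxk : xb ≤ a + k := by
      have : (0:ℝ) ≤ (k:ℝ) := Nat.cast_nonneg k
      linarith
    have hGk : 2 * η' ≤ G (a + k) := by
      have h1 : G a ≤ G (a + k) := hGmono.monotoneOn (Set.mem_Ici.2 ha0)
        (Set.mem_Ici.2 (by positivity)) (by linarith [Nat.cast_nonneg (α := ℝ) k])
      linarith [hGa]
    calc ∫⁻ ω in S k, f ω ∂Q
        ≤ ∫⁻ _ in S k, ENNReal.ofReal (Real.exp (η' * (a + k + 1))) ∂Q := by
          refine setLIntegral_mono measurable_const fun ω hω => ?_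
          refine ENNReal.ofReal_le_ofReal (Real.exp_le_exp.2 ?_)
          have h2 : - V00 ω ≤ a + k + 1 := hω.2
          nlinarith
      _ = ENNReal.ofReal (Real.exp (η' * (a + k + 1))) * Q (S k) := setLIntegral_const _ _
      _ ≤ ENNReal.ofReal (Real.exp (η' * (a + k + 1))) *
            ENNReal.ofReal (Real.exp (-((a + k) * G (a + k)))) := by
          refine mul_le_mul_right ?_ _
          rw [← htail _ hxk]
          exact measure_mono fun ω hω => hω.1
      _ = ENNReal.ofReal (Real.exp (η' * (a + k + 1)) * Real.exp (-((a + k) * G (a + k)))) := by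
          rw [ENNReal.ofReal_mul (Real.exp_nonneg _)]
      _ ≤ ENNReal.ofReal (Real.exp (η' * (1 - a)) * Real.exp (-η') ^ k) := by
          refine ENNReal.ofReal_le_ofReal ?_
          rw [← Real.exp_add, ← Real.exp_nat_mul, ← Real.exp_add]
          refine Real.exp_le_exp.2 ?_
          have hk0 : (0:ℝ) ≤ (k:ℝ) := Nat.cast_nonneg k
          have : (a + k) * (2 * η') ≤ (a + k) * G (a + k) :=
            mul_le_mul_of_nonneg_left hGk (by linarith)
          nlinarith
      _ = _ := by
          rw [ENNReal.ofReal_mul (Real.exp_nonneg _),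
            ENNReal.ofReal_pow (Real.exp_nonneg _)]
  -- tail sum bound
  have hr : ENNReal.ofReal (Real.exp (-η')) ≤ 2⁻¹ := by
    rw [show (2⁻¹ : ℝ≥0∞) = ENNReal.ofReal 2⁻¹ by
      rw [ENNReal.ofReal_inv_of_pos (by norm_num), ENNReal.ofReal_ofNat]]
    refine ENNReal.ofReal_le_ofReal ?_
    have h1 : Real.exp (-η') ≤ Real.exp (-1) := Real.exp_le_exp.2 (by linarith)
    have h2 : Real.exp (-1) ≤ 2⁻¹ := by
      rw [Real.exp_neg]
      refine inv_anti₀ (by norm_num) ?_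
      linarith [Real.add_one_le_exp (1:ℝ)]
    linarith
  have hAc_bound : ∫⁻ ω in Aᶜ, f ω ∂Q ≤ 1 := by
    calc ∫⁻ ω in Aᶜ, f ω ∂Q ≤ ∫⁻ ω in ⋃ k, S k, f ω ∂Q := lintegral_mono_set hAcS
      _ ≤ ∑' k, ∫⁻ ω in S k, f ω ∂Q := lintegral_iUnion_le _ _
      _ ≤ ∑' k : ℕ, ENNReal.ofReal (Real.exp (η' * (1 - a))) *
            ENNReal.ofReal (Real.exp (-η')) ^ k := ENNReal.tsum_le_tsum hshell
      _ = ENNReal.ofReal (Real.exp (η' * (1 - a))) *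
            (1 - ENNReal.ofReal (Real.exp (-η')))⁻¹ := by
          rw [ENNReal.tsum_mul_left, ENNReal.tsum_geometric]
      _ ≤ ENNReal.ofReal (Real.exp (η' * (1 - a))) * 2 := by
          refine mul_le_mul_right ?_ _
          rw [show (2:ℝ≥0∞) = (2⁻¹)⁻¹ by simp]
          refine ENNReal.inv_le_inv' ?_
          calc (2⁻¹ : ℝ≥0∞) = 1 - 2⁻¹ := ENNReal.one_sub_inv_two.symm
            _ ≤ 1 - ENNReal.ofReal (Real.exp (-η')) := tsub_le_tsub_left hr 1
      _ ≤ 1 := by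
          rw [show (2:ℝ≥0∞) = ENNReal.ofReal 2 from (ENNReal.ofReal_ofNat 2).symm,
            ← ENNReal.ofReal_mul (Real.exp_nonneg _), ← ENNReal.ofReal_one]
          refine ENNReal.ofReal_le_ofReal ?_
          have h1 : Real.exp (η' * (1 - a)) ≤ Real.exp (-1) := by
            refine Real.exp_le_exp.2 ?_
            nlinarith
          have h2 : Real.exp (-1) ≤ 2⁻¹ := by
            rw [Real.exp_neg]
            refine inv_anti₀ (by norm_num) ?_
            linarith [Real.add_one_le_exp (1:ℝ)]
          linarith
  have hkey : ∫⁻ ω, f ω ∂Q ≤ ENNReal.ofReal (Real.exp (2 * η' * a)) := by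
    rw [hsplit]
    calc (∫⁻ ω in A, f ω ∂Q) + ∫⁻ ω in Aᶜ, f ω ∂Q
        ≤ ENNReal.ofReal (Real.exp (η' * a)) + 1 := add_le_add hA_bound hAc_bound
      _ = ENNReal.ofReal (Real.exp (η' * a) + 1) := by
          rw [ENNReal.ofReal_add (Real.exp_nonneg _) zero_le_one, ENNReal.ofReal_one]
      _ ≤ ENNReal.ofReal (Real.exp (2 * η' * a)) := by
          refine ENNReal.ofReal_le_ofReal ?_
          have h1 : Real.exp (2 * η' * a) = Real.exp (η' * a) * Real.exp (η' * a) := by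
            rw [← Real.exp_add]; ring_nf
          have h2 : (2:ℝ) ≤ Real.exp (η' * a) := by
            have : (2:ℝ) ≤ η' * a := by nlinarith
            calc (2:ℝ) ≤ Real.exp 2 := by linarith [Real.add_one_le_exp (2:ℝ)]
              _ ≤ Real.exp (η' * a) := Real.exp_le_exp.2 this
          nlinarith [Real.exp_nonneg (η' * a)]
  have hint : Integrable (fun ω => Real.exp (-η' * V00 ω)) Q := by
    refine ⟨hfm.aestronglyMeasurable, ?_⟩
    rw [HasFiniteIntegral]
    have heq : ∀ ω : Ω, ‖Real.exp (-η' * V00 ω)‖ₑ = f ω := fun ω =>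
      Real.enorm_eq_ofReal (Real.exp_nonneg _)
    simp only [heq]
    exact lt_of_le_of_lt hkey ENNReal.ofReal_lt_top
  refine ⟨hint, ?_⟩
  rw [integral_eq_lintegral_of_nonneg_ae (Filter.Eventually.of_forall fun ω => Real.exp_nonneg _)
    hfm.aestronglyMeasurable]
  exact ENNReal.toReal_le_of_le_ofReal (Real.exp_nonneg _) hkey
end

section
/- Assume (AS0)–(AS3). Then: (1) for every ε > 0, limsup_{T→∞} R_ε(T)/T^{1+d} < ∞; (2) for every ε > 0, limsup_{T→∞} R_ε(T)/(T·G(2εT)) < ∞; (3) if ε ∈ (0, 1/2) or if f is non-increasing, then limsup_{T→∞} R_ε(T)/(T·G(T)) < ∞. -/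
open MeasureTheory ProbabilityTheory Filter
open scoped Classical ENNReal NNReal

noncomputable section AuxLemmas

variable {Ω : Type*} [MeasurableSpace Ω]


lemma norm1_unitVecs {d : ℕ} {v : Fin d → ℤ} (hv : v ∈ unitVecs d) : norm1 v = 1 := by
  simp only [unitVecs, Finset.mem_image] at hv
  obtain ⟨p, -, rfl⟩ := hv
  unfold norm1
  rw [Finset.sum_eq_single p.1]
  · cases p.2 <;> simp
  · intro j _ hj; simp [hj]
  · simp

lemma card_unitVecs (d : ℕ) : (unitVecs d).card = 2 * d := by
  rw [unitVecs, Finset.card_image_of_injective _ ?_]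
  · simp [Finset.card_univ, mul_comm]
  · intro p q h
    have h1 := congrFun h p.1
    dsimp only at h1
    have hpq : p.1 = q.1 := by
      by_contra hne
      rw [if_pos rfl, if_neg hne] at h1
      cases hb2 : p.2 <;> simp [hb2] at h1
    have h2 := h1
    rw [if_pos rfl, if_pos hpq] at h2
    have hb : p.2 = q.2 := by
      cases hp : p.2 <;> cases hq : q.2 <;> simp [hp, hq] at h2 ⊢ <;> omega
    exact Prod.ext hpq hb

lemma card_pathSet (d T : ℕ) : (pathSet d T).card = (2 * d) ^ T := by
  rw [pathSet, Fintype.card_piFinset]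
  simp [card_unitVecs]

lemma pathPos_zero {d T : ℕ} (ε : Fin T → (Fin d → ℤ)) : pathPos ε 0 = 0 := by
  unfold pathPos
  rw [Finset.filter_false_of_mem (fun s _ => by omega), Finset.sum_empty]

lemma abs_apply_le_norm1 {d : ℕ} (x : Fin d → ℤ) (i : Fin d) : |x i| ≤ norm1 x :=
  Finset.single_le_sum (fun j _ => abs_nonneg (x j)) (Finset.mem_univ i)

lemma norm1_pathPos_le {d T : ℕ} {ε : Fin T → (Fin d → ℤ)} (hε : ε ∈ pathSet d T) (t : ℕ) :
    norm1 (pathPos ε t) ≤ (t : ℤ) := by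
  classical
  have hstep : ∀ s : Fin T, norm1 (ε s) = 1 := fun s =>
    norm1_unitVecs (Fintype.mem_piFinset.mp hε s)
  have h1 : norm1 (pathPos ε t) ≤
      ∑ s ∈ Finset.univ.filter (fun s : Fin T => (s : ℕ) < t), norm1 (ε s) := by
    unfold norm1 pathPos
    calc ∑ i, |(∑ s ∈ Finset.univ.filter (fun s : Fin T => (s : ℕ) < t), ε s) i|
        = ∑ i, |∑ s ∈ Finset.univ.filter (fun s : Fin T => (s : ℕ) < t), ε s i| := by
          simp
      _ ≤ ∑ i, ∑ s ∈ Finset.univ.filter (fun s : Fin T => (s : ℕ) < t), |ε s i| :=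
          Finset.sum_le_sum fun i _ => Finset.abs_sum_le_sum_abs _ _
      _ = ∑ s ∈ Finset.univ.filter (fun s : Fin T => (s : ℕ) < t), ∑ i, |ε s i| :=
          Finset.sum_comm
  have h2 : (Finset.univ.filter (fun s : Fin T => (s : ℕ) < t)).card ≤ t := by
    have := Finset.card_le_card_of_injOn
      (s := Finset.univ.filter (fun s : Fin T => (s : ℕ) < t))
      (t := Finset.range t) (fun s : Fin T => (s : ℕ))
      (fun s hs => by simpa using (Finset.mem_filter.mp hs).2)
      (fun a _ b _ h => Fin.val_injective h)
    simpa using this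
  calc norm1 (pathPos ε t) ≤ _ := h1
    _ = ((Finset.univ.filter (fun s : Fin T => (s : ℕ) < t)).card : ℤ) := by
        rw [Finset.sum_congr rfl (fun s _ => hstep s)]; simp
    _ ≤ (t : ℤ) := by exact_mod_cast h2

def modV (d : ℕ) (V : ℕ → (Fin d → ℤ) → Ω → ℝ) : ℕ → (Fin d → ℤ) → Ω → ℝ :=
  fun t x => if t = 0 then 0 else V t x

lemma Hpath_split {d T : ℕ} (hT : 1 ≤ T) (V : ℕ → (Fin d → ℤ) → Ω → ℝ)
    (ε : Fin T → (Fin d → ℤ)) (ω : Ω) :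
    Hpath V ε ω = V 0 0 ω + Hpath (modV d V) ε ω := by
  unfold Hpath
  have key : ∀ t : Fin T, V (t : ℕ) (pathPos ε t) ω
      = (if (t : ℕ) = 0 then V 0 0 ω else 0) + modV d V (t : ℕ) (pathPos ε t) ω := by
    intro t
    by_cases h : (t : ℕ) = 0
    · rw [h, pathPos_zero]
      simp [modV]
    · simp [modV, h]
  rw [Finset.sum_congr rfl fun t _ => key t, Finset.sum_add_distrib]
  congr 1
  rw [Fin.sum_univ_eq_sum_range (fun t => if t = 0 then V 0 0 ω else 0) T,
    Finset.sum_ite_eq' (Finset.range T) 0 (fun _ => V 0 0 ω),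
    if_pos (Finset.mem_range.mpr (by omega : 0 < T))]

lemma Zpart_split {d T : ℕ} (hT : 1 ≤ T) (V : ℕ → (Fin d → ℤ) → Ω → ℝ) (ω : Ω) :
    Zpart d V T ω = Real.exp (V 0 0 ω) * Zpart d (modV d V) T ω := by
  unfold Zpart
  rw [Finset.sum_congr rfl fun ε _ => by rw [Hpath_split hT V ε ω, Real.exp_add],
    ← Finset.mul_sum]
  ring

lemma two_d_pos {d : ℕ} (hd : 1 ≤ d) : (0 : ℝ) < 2 * d := by
  have : (1 : ℝ) ≤ (d : ℝ) := by exact_mod_cast hd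
  linarith

lemma Zpart_pos {d T : ℕ} (hd : 1 ≤ d) (V : ℕ → (Fin d → ℤ) → Ω → ℝ) (ω : Ω) :
    0 < Zpart d V T ω := by
  unfold Zpart
  apply mul_pos (pow_pos (inv_pos.mpr (two_d_pos hd)) T)
  apply Finset.sum_pos (fun _ _ => Real.exp_pos _)
  apply Finset.card_pos.mp
  rw [card_pathSet]
  exact pow_pos (by omega) T

lemma Zpart_le_exp {d T : ℕ} (hd : 1 ≤ d) (V : ℕ → (Fin d → ℤ) → Ω → ℝ) (ω : Ω) (a : ℝ)
    (h : ∀ (t : ℕ) (x : Fin d → ℤ), t < T → norm1 x ≤ (t : ℤ) → V t x ω ≤ -a) :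
    Zpart d V T ω ≤ Real.exp (-(a * T)) := by
  unfold Zpart
  have hH : ∀ ε ∈ pathSet d T, Real.exp (Hpath V ε ω) ≤ Real.exp (-(a * T)) := by
    intro ε hε
    apply Real.exp_le_exp.mpr
    unfold Hpath
    calc ∑ t : Fin T, V (t : ℕ) (pathPos ε t) ω
        ≤ ∑ _t : Fin T, (-a) := Finset.sum_le_sum fun t _ =>
          h t (pathPos ε t) t.isLt (norm1_pathPos_le hε t)
      _ = -(a * T) := by simp [mul_comm]
  calc ((2 * d : ℝ))⁻¹ ^ T * ∑ ε ∈ pathSet d T, Real.exp (Hpath V ε ω)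
      ≤ ((2 * d : ℝ))⁻¹ ^ T * ∑ _ε ∈ pathSet d T, Real.exp (-(a * T)) := by
        apply mul_le_mul_of_nonneg_left (Finset.sum_le_sum hH)
        positivity
    _ = ((2 * d : ℝ))⁻¹ ^ T * ((2 * d : ℝ) ^ T * Real.exp (-(a * T))) := by
        rw [Finset.sum_const, card_pathSet, nsmul_eq_mul]
        push_cast
        ring
    _ = Real.exp (-(a * T)) := by
        rw [← mul_assoc, ← mul_pow, inv_mul_cancel₀ (ne_of_gt (two_d_pos hd)), one_pow, one_mul]

lemma measurable_Zpart {d : ℕ} (V : ℕ → (Fin d → ℤ) → Ω → ℝ)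
    (hm : ∀ t x, Measurable (V t x)) (T : ℕ) : Measurable (Zpart d V T) := by
  unfold Zpart Hpath
  have h1 : ∀ ε : Fin T → Fin d → ℤ,
      Measurable (fun ω => Real.exp (∑ t : Fin T, V t (pathPos ε t) ω)) := by
    intro ε
    have h2 : Measurable (fun ω => ∑ t : Fin T, V t (pathPos ε t) ω) :=
      Finset.measurable_sum Finset.univ fun t _ => hm t (pathPos ε t)
    fun_prop
  have hs : Measurable (fun ω => ∑ ε ∈ pathSet d T,
      Real.exp (∑ t : Fin T, V t (pathPos ε t) ω)) :=
    Finset.measurable_sum _ fun ε _ => h1 ε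
  exact hs.const_mul _

lemma measurable_modV {d : ℕ} {V : ℕ → (Fin d → ℤ) → Ω → ℝ}
    (hm : ∀ t x, Measurable (V t x)) : ∀ t x, Measurable (modV d V t x) := by
  intro t x
  unfold modV
  split
  · exact measurable_const
  · exact hm t x


lemma mem_siteBox {d T : ℕ} {ε : Fin T → (Fin d → ℤ)} (hε : ε ∈ pathSet d T) (t : Fin T) :
    pathPos ε t ∈ Fintype.piFinset (fun _ : Fin d => Finset.Icc (-(T : ℤ)) (T : ℤ)) := by
  rw [Fintype.mem_piFinset]
  intro i
  rw [Finset.mem_Icc, ← abs_le]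
  exact (abs_apply_le_norm1 (pathPos ε t) i).trans
    ((norm1_pathPos_le hε t).trans (by exact_mod_cast (le_of_lt t.isLt)))

def auxG (d T : ℕ) (S' : Finset (ℕ × (Fin d → ℤ))) : ({p // p ∈ S'} → ℝ) → ℝ := fun v =>
  ((2 * d : ℝ))⁻¹ ^ T * ∑ ε ∈ pathSet d T,
    Real.exp (∑ t : Fin T, if h : ((t : ℕ), pathPos ε t) ∈ S' then v ⟨_, h⟩ else 0)

lemma measurable_auxG (d T : ℕ) (S' : Finset (ℕ × (Fin d → ℤ))) :
    Measurable (auxG d T S') := by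
  unfold auxG
  have h1 : ∀ ε : Fin T → Fin d → ℤ, Measurable (fun v : {p // p ∈ S'} → ℝ =>
      Real.exp (∑ t : Fin T, if h : ((t : ℕ), pathPos ε t) ∈ S' then v ⟨_, h⟩ else 0)) := by
    intro ε
    have h2 : Measurable (fun v : {p // p ∈ S'} → ℝ =>
        ∑ t : Fin T, if h : ((t : ℕ), pathPos ε t) ∈ S' then v ⟨_, h⟩ else 0) := by
      apply Finset.measurable_sum
      intro t _
      by_cases h : ((t : ℕ), pathPos ε t) ∈ S'
      · simp only [dif_pos h]
        exact measurable_pi_apply _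
      · simp only [dif_neg h]
        exact measurable_const
    fun_prop
  exact (Finset.measurable_sum _ fun ε _ => h1 ε).const_mul _

set_option maxHeartbeats 1600000 in
lemma indepFun_V00_Zmod {d : ℕ} {Q : Measure Ω} {V : ℕ → (Fin d → ℤ) → Ω → ℝ}
    (hiid : IIDField d V Q) (T : ℕ) :
    IndepFun (V 0 0) (Zpart d (modV d V) T) Q := by
  classical
  set S0 : Finset (ℕ × (Fin d → ℤ)) := {((0 : ℕ), (0 : Fin d → ℤ))} with hS0
  set S' : Finset (ℕ × (Fin d → ℤ)) :=
    (Finset.Ico 1 T) ×ˢ (Fintype.piFinset fun _ : Fin d => Finset.Icc (-(T : ℤ)) (T : ℤ))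
    with hS'
  have hdisj : Disjoint S0 S' := by
    rw [Finset.disjoint_left]
    intro p hp hp'
    rw [hS0, Finset.mem_singleton] at hp
    rw [hp, hS', Finset.mem_product, Finset.mem_Ico] at hp'
    omega
  have hind0 := hiid.2.1.indepFun_finset S0 S' hdisj (fun p => hiid.1 p.1 p.2)
  have hφ : Measurable (fun v : {p // p ∈ S0} → ℝ =>
      v ⟨((0 : ℕ), (0 : Fin d → ℤ)), Finset.mem_singleton_self _⟩) := measurable_pi_apply _
  have hind := hind0.comp hφ (measurable_auxG d T S')
  have e1 : ((fun v : {p // p ∈ S0} → ℝ =>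
      v ⟨((0 : ℕ), (0 : Fin d → ℤ)), Finset.mem_singleton_self _⟩) ∘
      (fun a (i : S0) => (fun p : ℕ × (Fin d → ℤ) => V p.1 p.2) i a)) = V 0 0 := rfl
  have e2 : (auxG d T S' ∘
      (fun a (i : S') => (fun p : ℕ × (Fin d → ℤ) => V p.1 p.2) i a))
      = Zpart d (modV d V) T := by
    funext ω
    show auxG d T S' (fun i : S' => V (i : ℕ × (Fin d → ℤ)).1 (i : ℕ × (Fin d → ℤ)).2 ω)
      = Zpart d (modV d V) T ω
    unfold auxG Zpart Hpath
    congr 1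
    apply Finset.sum_congr rfl
    intro ε hε
    congr 1
    apply Finset.sum_congr rfl
    intro t _
    by_cases h : ((t : ℕ), pathPos ε t) ∈ S'
    · rw [dif_pos h]
      have ht : (t : ℕ) ≠ 0 := by
        have h1 := (Finset.mem_product.mp h).1
        rw [Finset.mem_Ico] at h1
        omega
      simp [modV, ht]
    · rw [dif_neg h]
      have ht : (t : ℕ) = 0 := by
        by_contra h0
        exact h (Finset.mem_product.mpr
          ⟨Finset.mem_Ico.mpr ⟨by omega, t.isLt⟩, mem_siteBox hε t⟩)
      simp [modV, ht]
  rw [e1, e2] at hind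
  exact hind

set_option maxHeartbeats 1600000 in
lemma core_bound (Q : Measure Ω) [IsProbabilityMeasure Q]
    {d : ℕ} (hd : 1 ≤ d) {V : ℕ → (Fin d → ℤ) → Ω → ℝ} (hiid : IIDField d V Q)
    {lam : ℝ} (hlam : FreeEnergy d V Q lam) {G : ℝ → ℝ} {xb : ℝ}
    (h3 : TailG (V 0 0) Q G xb) {ε : ℝ} (hε : 0 < ε) :
    ∀ᶠ T : ℕ in atTop,
      Rate d V Q lam ε T ≤ 2 * ε * T * G (2 * ε * T) + 1 := by
  classical
  have hmZt : ∀ T : ℕ, Measurable (Zpart d (modV d V) T) :=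
    fun T => measurable_Zpart _ (measurable_modV hiid.1) T
  -- a.e. convergence of the modified free energy
  have haeX : ∀ᵐ ω ∂Q, Tendsto
      (fun T : ℕ => (T : ℝ)⁻¹ * Real.log (Zpart d (modV d V) T ω)) atTop (nhds lam) := by
    filter_upwards [hlam.2] with ω hω
    have h0 : Tendsto (fun T : ℕ => (T : ℝ)⁻¹ * V 0 0 ω) atTop (nhds 0) := by
      simpa using tendsto_inv_atTop_nhds_zero_nat.mul_const (V 0 0 ω)
    have hsub := hω.sub h0
    rw [sub_zero] at hsub
    apply hsub.congr'
    filter_upwards [eventually_ge_atTop 1] with T hT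
    rw [Zpart_split hT V ω, Real.log_mul (Real.exp_ne_zero _)
      (ne_of_gt (Zpart_pos hd _ ω)), Real.log_exp]
    ring
  have hmX : ∀ T : ℕ, AEStronglyMeasurable
      (fun ω => (T : ℝ)⁻¹ * Real.log (Zpart d (modV d V) T ω)) Q :=
    fun T => (((hmZt T).log).const_mul _).aestronglyMeasurable
  have hTIM := tendstoInMeasure_of_tendsto_ae (μ := Q) (g := fun _ => lam) hmX haeX
  have hev2 : ∀ᶠ T : ℕ in atTop,
      Q {ω | ε ≤ dist ((T : ℝ)⁻¹ * Real.log (Zpart d (modV d V) T ω)) lam} < 1/2 :=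
    (tendstoInMeasure_iff_dist.mp hTIM ε hε).eventually_lt_const (ENNReal.div_pos one_ne_zero ENNReal.ofNat_ne_top)
  have h2εT : Tendsto (fun T : ℕ => 2 * ε * (T : ℝ)) atTop atTop :=
    (tendsto_const_mul_atTop_of_pos (by linarith)).mpr tendsto_natCast_atTop_atTop
  filter_upwards [eventually_ge_atTop 1, hev2, h2εT.eventually_ge_atTop xb]
    with T hT1 hB2 hxbT
  have hTpos : (0 : ℝ) < T := by exact_mod_cast hT1
  set c : ℝ := 2 * ε * T with hc
  set B : Set Ω := (Zpart d (modV d V) T) ⁻¹' (Set.Iic (Real.exp ((lam + ε) * T))) with hBdef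
  have hBm : MeasurableSet B := (hmZt T) measurableSet_Iic
  have hBc : Q Bᶜ ≤ 1/2 := by
    refine le_trans (measure_mono ?_) hB2.le
    intro ω hω
    simp only [Set.mem_compl_iff, hBdef, Set.mem_preimage, Set.mem_Iic, not_le] at hω
    have hlog : (lam + ε) * T < Real.log (Zpart d (modV d V) T ω) :=
      (Real.lt_log_iff_exp_lt (Zpart_pos hd _ ω)).mpr hω
    have hX : lam + ε < (T : ℝ)⁻¹ * Real.log (Zpart d (modV d V) T ω) := by
      have h5 := mul_lt_mul_of_pos_left hlog (inv_pos.mpr hTpos)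
      have h6 : (T : ℝ)⁻¹ * ((lam + ε) * T) = lam + ε := by field_simp
      rwa [h6] at h5
    simp only [Set.mem_setOf_eq, Real.dist_eq]
    refine le_trans (by linarith : ε ≤ (T : ℝ)⁻¹ * Real.log (Zpart d (modV d V) T ω) - lam)
      (le_abs_self _)
  have hQB : (1/2 : ℝ≥0∞) ≤ Q B := by
    have hsum : Q B + Q Bᶜ = 1 := by
      rw [measure_add_measure_compl hBm, measure_univ]
    have h7 : (1 : ℝ≥0∞) ≤ Q B + 1/2 :=
      hsum.symm.trans_le (add_le_add le_rfl hBc)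
    have h12 : (1 : ℝ≥0∞) - 1/2 ≤ Q B := tsub_le_iff_right.mpr h7
    rwa [ENNReal.sub_half ENNReal.one_ne_top] at h12
  set A : Set Ω := (V 0 0) ⁻¹' (Set.Iio (-c)) with hAdef
  have hQA : (Q A).toReal = Real.exp (-(c * G c)) := by
    have h8 := h3 c hxbT
    have h9 : {ω | c < -(V 0 0 ω)} = A := by
      ext ω
      simp only [Set.mem_setOf_eq, hAdef, Set.mem_preimage, Set.mem_Iio]
      exact lt_neg
    rwa [h9] at h8
  have hmul := (indepFun_V00_Zmod hiid T).measure_inter_preimage_eq_mul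
    (Set.Iio (-c)) (Set.Iic (Real.exp ((lam + ε) * T))) measurableSet_Iio measurableSet_Iic
  have hsub : A ∩ B ⊆ {ω | Zpart d V T ω ≤ Real.exp ((lam - ε) * T)} := by
    rintro ω ⟨hA, hB⟩
    simp only [hAdef, Set.mem_preimage, Set.mem_Iio] at hA
    simp only [hBdef, Set.mem_preimage, Set.mem_Iic] at hB
    simp only [Set.mem_setOf_eq]
    rw [Zpart_split hT1 V ω]
    calc Real.exp (V 0 0 ω) * Zpart d (modV d V) T ω
        ≤ Real.exp (-c) * Real.exp ((lam + ε) * T) :=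
          mul_le_mul (Real.exp_le_exp.mpr hA.le) hB (Zpart_pos hd _ ω).le (Real.exp_pos _).le
      _ = Real.exp ((lam - ε) * T) := by
          rw [← Real.exp_add]; congr 1; rw [hc]; ring
  have hQE : Real.exp (-(c * G c)) * (1/2)
      ≤ (Q {ω | Zpart d V T ω ≤ Real.exp ((lam - ε) * T)}).toReal := by
    have h10 : Q A * Q B ≤ Q {ω | Zpart d V T ω ≤ Real.exp ((lam - ε) * T)} := by
      rw [← hmul]; exact measure_mono hsub
    have h11 := ENNReal.toReal_mono (measure_ne_top Q _) h10
    rw [ENNReal.toReal_mul, hQA] at h11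
    refine le_trans ?_ h11
    refine mul_le_mul_of_nonneg_left ?_ (Real.exp_pos _).le
    have h13 := ENNReal.toReal_mono (measure_ne_top Q B) hQB
    simpa using h13
  have hpos : (0:ℝ) < Real.exp (-(c * G c)) * (1/2) := by positivity
  have hlog2 := Real.log_le_log hpos hQE
  rw [Real.log_mul (Real.exp_ne_zero _) (by norm_num), Real.log_exp, one_div,
    Real.log_inv] at hlog2
  unfold Rate
  have hlog2' : -Real.log ((Q {ω | Zpart d V T ω ≤ Real.exp ((lam - ε) * T)}).toReal)
      ≤ c * G c + Real.log 2 := by linarith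
  have hln2 : Real.log 2 ≤ 1 := by
    have := Real.log_le_sub_one_of_pos (by norm_num : (0:ℝ) < 2)
    linarith
  calc -Real.log ((Q {ω | Zpart d V T ω ≤ Real.exp ((lam - ε) * T)}).toReal)
      ≤ c * G c + Real.log 2 := hlog2'
    _ ≤ 2 * ε * T * G (2 * ε * T) + 1 := by rw [hc] at *; linarith

set_option maxHeartbeats 1600000 in
lemma part1_bound (Q : Measure Ω) [IsProbabilityMeasure Q]
    {d : ℕ} (hd : 1 ≤ d) {V : ℕ → (Fin d → ℤ) → Ω → ℝ} (hiid : IIDField d V Q)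
    {lam : ℝ} (hlam : FreeEnergy d V Q lam) {G : ℝ → ℝ} {xb : ℝ} (hxb : 0 < xb)
    (hG : GoodG G) (h3 : TailG (V 0 0) Q G xb) {ε : ℝ} (hε : 0 < ε) :
    ∃ C : ℝ, ∀ᶠ T : ℕ in atTop, Rate d V Q lam ε T ≤ C * (T : ℝ) ^ (1 + d) := by
  classical
  set a : ℝ := max (2 * ε) xb with ha
  have ha2 : 2 * ε ≤ a := le_max_left _ _
  have haxb : xb ≤ a := le_max_right _ _
  have ha0 : 0 < a := lt_of_lt_of_le hxb haxb
  refine ⟨3 ^ d * (a * G a), ?_⟩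
  filter_upwards [eventually_ge_atTop 1] with T hT1
  have hTpos : (0 : ℝ) < T := by exact_mod_cast hT1
  set S1 : Finset (ℕ × (Fin d → ℤ)) :=
    (Finset.range T) ×ˢ (Fintype.piFinset fun _ : Fin d => Finset.Icc (-(T : ℤ)) (T : ℤ))
    with hS1
  have hQA := hiid.2.1.measure_inter_preimage_eq_mul (S := S1)
    (sets := fun _ => Set.Iio (-a)) (fun i _ => measurableSet_Iio)
  have hfac : ∀ p : ℕ × (Fin d → ℤ),
      Q ((fun p : ℕ × (Fin d → ℤ) => V p.1 p.2) p ⁻¹' Set.Iio (-a))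
        = Q ((V 0 0) ⁻¹' Set.Iio (-a)) :=
    fun p => (hiid.2.2 p).measure_mem_eq measurableSet_Iio
  rw [Finset.prod_congr rfl (fun p _ => hfac p), Finset.prod_const] at hQA
  set q : ℝ≥0∞ := Q ((V 0 0) ⁻¹' Set.Iio (-a)) with hq
  have hqR : q.toReal = Real.exp (-(a * G a)) := by
    have h8 := h3 a haxb
    have h9 : {ω | a < -(V 0 0 ω)} = (V 0 0) ⁻¹' Set.Iio (-a) := by
      ext ω
      simp only [Set.mem_setOf_eq, Set.mem_preimage, Set.mem_Iio]
      exact lt_neg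
    rwa [h9] at h8
  have hsub : (⋂ p ∈ S1, (fun p : ℕ × (Fin d → ℤ) => V p.1 p.2) p ⁻¹' Set.Iio (-a))
      ⊆ {ω | Zpart d V T ω ≤ Real.exp ((lam - ε) * T)} := by
    intro ω hω
    rw [Set.mem_iInter₂] at hω
    simp only [Set.mem_setOf_eq]
    have hb : Zpart d V T ω ≤ Real.exp (-(a * T)) := by
      apply Zpart_le_exp hd
      intro t x ht hx
      have hmem : (t, x) ∈ S1 := by
        rw [hS1, Finset.mem_product]
        refine ⟨Finset.mem_range.mpr ht, ?_⟩
        rw [Fintype.mem_piFinset]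
        intro i
        rw [Finset.mem_Icc, ← abs_le]
        exact (abs_apply_le_norm1 x i).trans (hx.trans (by exact_mod_cast ht.le))
      have hV := hω (t, x) hmem
      simp only [Set.mem_preimage, Set.mem_Iio] at hV
      exact hV.le
    refine hb.trans (Real.exp_le_exp.mpr ?_)
    nlinarith [mul_nonneg (show (0:ℝ) ≤ lam - ε + a by linarith [hlam.1]) hTpos.le]
  have hQE : q ^ S1.card ≤ Q {ω | Zpart d V T ω ≤ Real.exp ((lam - ε) * T)} := by
    rw [← hQA]
    exact measure_mono hsub
  have htoReal : (q ^ S1.card).toReal = Real.exp (-(a * G a)) ^ S1.card := by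
    rw [ENNReal.toReal_pow, hqR]
  have hppos : (0 : ℝ) < Real.exp (-(a * G a)) ^ S1.card := pow_pos (Real.exp_pos _) _
  have h11 := ENNReal.toReal_mono (measure_ne_top Q _) hQE
  rw [htoReal] at h11
  have hlogle := Real.log_le_log hppos h11
  rw [Real.log_pow, Real.log_exp] at hlogle
  have hGa : 0 ≤ G a := hG.2.2.2.1 a ha0.le
  have hcard : (S1.card : ℝ) = T * ((2 * T + 1 : ℕ) : ℝ) ^ d := by
    rw [hS1, Finset.card_product, Finset.card_range, Fintype.card_piFinset]
    have hIcc : (Finset.Icc (-(T : ℤ)) (T : ℤ)).card = 2 * T + 1 := by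
      rw [Int.card_Icc]
      omega
    simp only [hIcc, Finset.prod_const, Finset.card_univ, Fintype.card_fin]
    push_cast
    ring
  have hbound : (S1.card : ℝ) ≤ 3 ^ d * (T : ℝ) ^ (1 + d) := by
    have hT1R : (1 : ℝ) ≤ T := by exact_mod_cast hT1
    have h2T : ((2 * T + 1 : ℕ) : ℝ) ≤ 3 * T := by push_cast; linarith
    have hple : ((2 * T + 1 : ℕ) : ℝ) ^ d ≤ 3 ^ d * (T : ℝ) ^ d := by
      calc ((2 * T + 1 : ℕ) : ℝ) ^ d ≤ (3 * (T : ℝ)) ^ d :=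
            pow_le_pow_left₀ (by positivity) h2T d
        _ = 3 ^ d * (T : ℝ) ^ d := mul_pow _ _ _
    rw [hcard, pow_add, pow_one]
    calc (T : ℝ) * ((2 * T + 1 : ℕ) : ℝ) ^ d ≤ (T : ℝ) * (3 ^ d * (T : ℝ) ^ d) :=
          mul_le_mul_of_nonneg_left hple hTpos.le
      _ = 3 ^ d * ((T : ℝ) * (T : ℝ) ^ d) := by ring
  have hfinal : (S1.card : ℝ) * (a * G a) ≤ 3 ^ d * (a * G a) * (T : ℝ) ^ (1 + d) := by
    have := mul_le_mul_of_nonneg_right hbound (mul_nonneg ha0.le hGa)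
    nlinarith [this]
  unfold Rate
  linarith [hlogle, hfinal]

end AuxLemmas

/-- Lemma 2.10 (a priori upper bounds on the rate):
(1) `limsup R_ε(T)/T^(1+d) < ∞`; (2) `limsup R_ε(T)/(T·G(2εT)) < ∞`;
(3) if `ε < 1/2` or `f` is non-increasing, `limsup R_ε(T)/(T·G(T)) < ∞`. -/
theorem rate_apriori_upper_bounds
    {Ω : Type*} [MeasurableSpace Ω] (Q : Measure Ω) [IsProbabilityMeasure Q]
    (d : ℕ) (hd : 1 ≤ d) (V : ℕ → (Fin d → ℤ) → Ω → ℝ)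
    (hiid : IIDField d V Q)
    (h0 : NonDeg (V 0 0) Q) (h1 : Centered (V 0 0) Q) (h2 : ExpMoments (V 0 0) Q)
    (lam : ℝ) (hlam : FreeEnergy d V Q lam)
    (G Ginv : ℝ → ℝ) (xb : ℝ) (hxb : 0 < xb) (hG : GoodG G)
    (hGinv : GinvSpec G Ginv) (h3 : TailG (V 0 0) Q G xb) :
    (∀ ε > (0:ℝ), ∃ C : ℝ, ∀ᶠ T : ℕ in atTop,
      Rate d V Q lam ε T ≤ C * (T : ℝ) ^ (1 + d)) ∧
    (∀ ε > (0:ℝ), ∃ C : ℝ, ∀ᶠ T : ℕ in atTop,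
      Rate d V Q lam ε T ≤ C * ((T : ℝ) * G (2 * ε * T))) ∧
    (∀ ε > (0:ℝ),
      (ε < 1/2 ∨ ∀ x y : ℝ, 0 < x → x ≤ y → G y / y ^ d ≤ G x / x ^ d) →
      ∃ C : ℝ, ∀ᶠ T : ℕ in atTop,
        Rate d V Q lam ε T ≤ C * ((T : ℝ) * G T)) := by
  refine ⟨fun ε hε => part1_bound Q hd hiid hlam hxb hG h3 hε, fun ε hε => ?_,
    fun ε hε hcase => ?_⟩
  · -- Part (2)
    refine ⟨2 * ε + 1, ?_⟩
    have h2εT : Tendsto (fun T : ℕ => 2 * ε * (T : ℝ)) atTop atTop :=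
      (tendsto_const_mul_atTop_of_pos (by linarith)).mpr tendsto_natCast_atTop_atTop
    have hG1 : ∀ᶠ T : ℕ in atTop, 1 ≤ G (2 * ε * T) :=
      (hG.2.2.2.2.comp h2εT).eventually_ge_atTop 1
    filter_upwards [core_bound Q hd hiid hlam h3 hε, hG1, eventually_ge_atTop 1]
      with T hcore hG1T hT1
    have hT1R : (1 : ℝ) ≤ T := by exact_mod_cast hT1
    have h1 : 1 ≤ (T : ℝ) * G (2 * ε * T) := by nlinarith
    calc Rate d V Q lam ε T ≤ 2 * ε * T * G (2 * ε * T) + 1 := hcore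
      _ ≤ (2 * ε + 1) * ((T : ℝ) * G (2 * ε * T)) := by nlinarith
  · -- Part (3)
    have hKb : ∃ K : ℝ, 0 ≤ K ∧ ∀ᶠ T : ℕ in atTop, G (2 * ε * T) ≤ K * G T := by
      rcases le_or_gt (2 * ε) 1 with hle | hgt
      · refine ⟨1, zero_le_one, ?_⟩
        filter_upwards [eventually_ge_atTop 1] with T hT1
        have hTpos : (0 : ℝ) < T := by exact_mod_cast hT1
        have h1 : 2 * ε * (T : ℝ) ≤ T := by nlinarith
        have h2 := hG.2.1.monotoneOn (Set.mem_Ici.mpr (by nlinarith : (0:ℝ) ≤ 2 * ε * T))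
          (Set.mem_Ici.mpr hTpos.le) h1
        linarith
      · rcases hcase with hcase | hf
        · exfalso; linarith
        · refine ⟨(2 * ε) ^ d, by positivity, ?_⟩
          filter_upwards [eventually_ge_atTop 1] with T hT1
          have hTpos : (0 : ℝ) < T := by exact_mod_cast hT1
          have h1 : (T : ℝ) ≤ 2 * ε * T := by nlinarith
          have h2 := hf T (2 * ε * T) hTpos h1
          have h3' : (0 : ℝ) < (2 * ε * (T : ℝ)) ^ d := by positivity
          have h4 : (0 : ℝ) < (T : ℝ) ^ d := by positivity
          rw [div_le_div_iff₀ h3' h4] at h2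
          have h5 : G (2 * ε * T) * (T : ℝ) ^ d ≤ ((2 * ε) ^ d * G T) * (T : ℝ) ^ d := by
            calc G (2 * ε * T) * (T : ℝ) ^ d ≤ G T * (2 * ε * (T : ℝ)) ^ d := h2
              _ = ((2 * ε) ^ d * G T) * (T : ℝ) ^ d := by rw [mul_pow]; ring
          exact le_of_mul_le_mul_right h5 h4
    rcases hKb with ⟨K, hK0, hKev⟩
    refine ⟨2 * ε * K + 1, ?_⟩
    have hGT1 : ∀ᶠ T : ℕ in atTop, 1 ≤ G T :=
      (hG.2.2.2.2.comp tendsto_natCast_atTop_atTop).eventually_ge_atTop 1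
    filter_upwards [core_bound Q hd hiid hlam h3 hε, hKev, hGT1, eventually_ge_atTop 1]
      with T hcore hKT hGT hT1
    have hT1R : (1 : ℝ) ≤ T := by exact_mod_cast hT1
    have hstep : 2 * ε * T * G (2 * ε * T) ≤ 2 * ε * T * (K * G T) :=
      mul_le_mul_of_nonneg_left hKT (by positivity)
    have h1 : 1 ≤ (T : ℝ) * G T := by nlinarith
    calc Rate d V Q lam ε T ≤ 2 * ε * T * G (2 * ε * T) + 1 := hcore
      _ ≤ 2 * ε * T * (K * G T) + 1 := by linarith
      _ ≤ (2 * ε * K + 1) * ((T : ℝ) * G T) := by nlinarith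
end
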